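/- arXiv:2107.12121 — 2 statements merged into one kernel-verified Lean document; each statement's English description precedes it below -/
import Mathlib

section
/- Let m, n ≥ 2 be coprime and let a_k(m) denote the k-th base-n digit of 1/m. Then m · a_k(m) ≡ −[n^k]_m (mod n) for all k ≥ 1, where [n^k]_m is the least positive residue of n^k modulo m. -/
/-- Least positive residue of `g` modulo `m`. -/
def lpr (g m : ℕ) : ℕ := if g % m = 0 then m else g % m

/-- The `k`-th digit of the base-`n` expansion of `1/m`, via the least positive
residue formula `a_k = (n·[n^{k−1}]_m − [n^k]_m)/m`. -/
def baseDigit (n m k : ℕ) : ℕ := (n * lpr (n ^ (k - 1)) m - lpr (n ^ k) m) / m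

/-!
Since `[g]_m ≡ g (mod m)` and `0 < [g]_m ≤ g` for `g > 0`, the number `n·[n^{k−1}]_m − [n^k]_m`
is a nonnegative multiple of `m`, so `m·a_k(m) = n·[n^{k−1}]_m − [n^k]_m` exactly; reducing this
identity mod `n` gives the congruence.
-/

theorem lpr_modEq (g m : ℕ) : lpr g m ≡ g [MOD m] := by
  unfold lpr
  split_ifs with h
  · exact (Nat.mod_self m).trans h.symm
  · exact Nat.mod_mod g m

theorem lpr_congr {g g' m : ℕ} (h : g ≡ g' [MOD m]) : lpr g m = lpr g' m := by
  rw [lpr, lpr, show g % m = g' % m from h]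

theorem lpr_pos {g : ℕ} (hg : 0 < g) (m : ℕ) : 0 < lpr g m := by
  unfold lpr
  split_ifs with h
  · exact Nat.pos_of_ne_zero fun hm => by simp [hm] at h; omega
  · exact Nat.pos_of_ne_zero h

theorem lpr_le {g : ℕ} (hg : 0 < g) (m : ℕ) : lpr g m ≤ g := by
  unfold lpr
  split_ifs with h
  · exact Nat.le_of_dvd hg (Nat.dvd_of_mod_eq_zero h)
  · exact Nat.mod_le g m

theorem lpr_mul_le {n g : ℕ} (hn : 0 < n) (hg : 0 < g) (m : ℕ) :
    lpr (n * g) m ≤ n * lpr g m := by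
  rw [lpr_congr ((lpr_modEq g m).mul_left n).symm]
  exact lpr_le (Nat.mul_pos hn (lpr_pos hg m)) m

theorem dvd_mul_lpr_sub_lpr_mul (n g m : ℕ) : m ∣ n * lpr g m - lpr (n * g) m :=
  Nat.dvd_of_mod_eq_zero <| Nat.sub_mod_eq_zero_of_mod_eq <|
    ((lpr_modEq g m).mul_left n).trans (lpr_modEq (n * g) m).symm

theorem mul_baseDigit {n : ℕ} (hn : 0 < n) (m : ℕ) {k : ℕ} (hk : 1 ≤ k) :
    (m * baseDigit n m k : ℤ) = n * lpr (n ^ (k - 1)) m - lpr (n ^ k) m := by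
  have hpow : n ^ k = n * n ^ (k - 1) := by rw [← pow_succ']; congr 1; omega
  have hpos : 0 < n ^ (k - 1) := Nat.pow_pos hn
  rw [baseDigit, hpow, ← Nat.cast_mul, Nat.mul_div_cancel' (dvd_mul_lpr_sub_lpr_mul _ _ _),
    Nat.cast_sub (lpr_mul_le hn hpos m), Nat.cast_mul]

theorem digit_congruence_general (m n : ℕ) (hn : 2 ≤ n) (k : ℕ) (hk : 1 ≤ k) :
    (m * baseDigit n m k : ℤ) ≡ -(lpr (n ^ k) m : ℤ) [ZMOD n] := by
  rw [mul_baseDigit (by omega) m hk, Int.modEq_iff_dvd]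
  exact ⟨-(lpr (n ^ (k - 1)) m : ℤ), by ring⟩

theorem digit_congruence (m n : ℕ) (hm : 2 ≤ m) (hn : 2 ≤ n)
    (hco : Nat.Coprime m n) (k : ℕ) (hk : 1 ≤ k) :
    (m * baseDigit n m k : ℤ) ≡ -(lpr (n ^ k) m : ℤ) [ZMOD n] :=
  digit_congruence_general m n hn k hk
end

section
/- Let m be an odd prime and n ≥ 2 coprime to m. Then n is a primitive root modulo m if and only if the integer α = (n^{m−1} − 1)/m is not periodic in base n with any period ℓ properly dividing m−1; precisely, n is a primitive root mod m iff there is no proper divisor ℓ of m−1 such that (n^{m−1} − 1)/(n^ℓ − 1) divides α. -/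
/-!
Let `d` be the order of `n` modulo `m` and `N = n ^ (m - 1) - 1`. For `ℓ ∣ m - 1` both
`n ^ ℓ - 1` and `m` divide `N`, so `N / (n ^ ℓ - 1) ∣ N / m` is equivalent to `m ∣ n ^ ℓ - 1`,
i.e. to `d ∣ ℓ`. Hence a period `ℓ` exists exactly when `d` divides a proper divisor of `m - 1`,
i.e. when `d ≠ m - 1`.
-/

theorem Nat.div_dvd_div_left_iff {a b k : ℕ} (hk : k ≠ 0) (ha : a ∣ k) (hb : b ∣ k) :
    k / a ∣ k / b ↔ b ∣ a := by
  have hka : 0 < k / a := Nat.div_pos (Nat.le_of_dvd (Nat.pos_of_ne_zero hk) ha)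
    (Nat.pos_of_dvd_of_pos ha (Nat.pos_of_ne_zero hk))
  rw [Nat.dvd_div_iff_mul_dvd hb, ← Nat.mul_dvd_mul_iff_right hka (b := a),
    Nat.mul_div_cancel' ha]

theorem Nat.eq_iff_not_dvd_proper_divisor {d k : ℕ} (hk : k ≠ 0) (hd : d ∣ k) :
    d = k ↔ ¬∃ ℓ, ℓ ∣ k ∧ ℓ < k ∧ d ∣ ℓ := by
  constructor
  · rintro rfl ⟨ℓ, hℓd, hℓlt, hdℓ⟩
    exact hℓlt.ne (Nat.dvd_antisymm hℓd hdℓ)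
  · intro h
    by_contra hne
    exact h ⟨d, hd, lt_of_le_of_ne (Nat.le_of_dvd (Nat.pos_of_ne_zero hk) hd) hne, dvd_rfl⟩

theorem ZMod.dvd_pow_sub_one_iff_orderOf_dvd {m n : ℕ} (hn : n ≠ 0) (ℓ : ℕ) :
    m ∣ n ^ ℓ - 1 ↔ orderOf (n : ZMod m) ∣ ℓ := by
  rw [← ZMod.natCast_eq_zero_iff, Nat.cast_sub (Nat.one_le_pow _ _ (Nat.pos_of_ne_zero hn)),
    sub_eq_zero, Nat.cast_pow, Nat.cast_one, orderOf_dvd_iff_pow_eq_one]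

theorem div_pow_sub_one_dvd_div_iff_orderOf_dvd {m n k ℓ : ℕ} (hn : 2 ≤ n) (hk : k ≠ 0)
    (hℓk : ℓ ∣ k) (hmk : m ∣ n ^ k - 1) :
    (n ^ k - 1) / (n ^ ℓ - 1) ∣ (n ^ k - 1) / m ↔ orderOf (n : ZMod m) ∣ ℓ := by
  have hN : n ^ k - 1 ≠ 0 := Nat.sub_ne_zero_of_lt (Nat.one_lt_pow hk (by omega))
  rw [Nat.div_dvd_div_left_iff hN (Nat.pow_sub_one_dvd_pow_sub_one n hℓk) hmk,
    ZMod.dvd_pow_sub_one_iff_orderOf_dvd (by omega)]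

theorem primitive_root_iff_nonperiodic_general (m n : ℕ) (hm : m.Prime)
    (hn : 2 ≤ n) (hco : Nat.Coprime m n) :
    orderOf (n : ZMod m) = m - 1 ↔
      ¬ ∃ ℓ : ℕ, ℓ ∣ m - 1 ∧ ℓ < m - 1 ∧
        ((n ^ (m - 1) - 1) / (n ^ ℓ - 1)) ∣ ((n ^ (m - 1) - 1) / m) := by
  have := Fact.mk hm
  have hn0 : (n : ZMod m) ≠ 0 := by
    rw [Ne, ZMod.natCast_eq_zero_iff]
    exact fun h ↦ hm.one_lt.ne' (hco.eq_one_of_dvd h)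
  have hord : orderOf (n : ZMod m) ∣ m - 1 := ZMod.orderOf_dvd_card_sub_one hn0
  have hm1 : m - 1 ≠ 0 := by have := hm.two_le; omega
  have hmN : m ∣ n ^ (m - 1) - 1 :=
    (ZMod.dvd_pow_sub_one_iff_orderOf_dvd (by omega) _).2 hord
  rw [Nat.eq_iff_not_dvd_proper_divisor hm1 hord]
  exact not_congr <| exists_congr fun ℓ ↦ and_congr_right fun hℓ ↦ and_congr_right fun _ ↦
    (div_pow_sub_one_dvd_div_iff_orderOf_dvd hn hm1 hℓ hmN).symm

theorem primitive_root_iff_nonperiodic (m n : ℕ) (hm : m.Prime) (hmo : Odd m)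
    (hn : 2 ≤ n) (hco : Nat.Coprime m n) :
    orderOf (n : ZMod m) = m - 1 ↔
      ¬ ∃ ℓ : ℕ, ℓ ∣ m - 1 ∧ ℓ < m - 1 ∧
        ((n ^ (m - 1) - 1) / (n ^ ℓ - 1)) ∣ ((n ^ (m - 1) - 1) / m) :=
  primitive_root_iff_nonperiodic_general m n hm hn hco
end
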